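/- arXiv:1912.08913 — 6 statements merged into one kernel-verified Lean document; each statement's English description precedes it below -/
import Mathlib

section
/- Let V ⊂ ℝ² be a finite set of n points and let s₁, s₂ ∈ S¹ be linearly independent unit vectors such that the heights ⟨v, s₁⟩ for v ∈ V are pairwise distinct and the heights ⟨v, s₂⟩ for v ∈ V are pairwise distinct. Let A = {a ∈ ℝ² : (∃ u ∈ V, ⟨a, s₁⟩ = ⟨u, s₁⟩) and (∃ u ∈ V, ⟨a, s₂⟩ = ⟨u, s₂⟩)}, i.e., A is the set of the n² intersection points of the filtration lines of V in directions s₁ and s₂. Suppose s₃ ∈ S¹ is such that distinct points of A have distinct heights in direction s₃. Then V = {a ∈ A : ∃ v ∈ V, ⟨a, s₃⟩ = ⟨v, s₃⟩}. -/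
open scoped InnerProductSpace

theorem Set.eq_sep_exists_apply_eq_of_subset_of_injOn {α β : Type*} {f : α → β} {s t : Set α}
    (hst : s ⊆ t) (hf : Set.InjOn f t) : s = {a ∈ t | ∃ v ∈ s, f a = f v} := by
  ext a
  constructor
  · intro ha
    exact ⟨hst ha, a, ha, rfl⟩
  · rintro ⟨hat, v, hv, hav⟩
    rwa [hf hat (hst hv) hav]

theorem subset_setOf_exists_inner_eq_and_exists_inner_eq {E : Type*} [SeminormedAddCommGroup E]
    [InnerProductSpace ℝ E] (V : Set E) (s₁ s₂ : E) :
    V ⊆ {a | (∃ u ∈ V, ⟪a, s₁⟫_ℝ = ⟪u, s₁⟫_ℝ) ∧ (∃ u ∈ V, ⟪a, s₂⟫_ℝ = ⟪u, s₂⟫_ℝ)} :=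
  fun v hv => ⟨⟨v, hv, rfl⟩, ⟨v, hv, rfl⟩⟩

theorem vertex_existence_plane_general
    (V : Finset (EuclideanSpace ℝ (Fin 2)))
    (s₁ s₂ : EuclideanSpace ℝ (Fin 2))
    (A : Set (EuclideanSpace ℝ (Fin 2)))
    (hA : A = {a | (∃ u ∈ V, ⟪a, s₁⟫_ℝ = ⟪u, s₁⟫_ℝ) ∧ (∃ u ∈ V, ⟪a, s₂⟫_ℝ = ⟪u, s₂⟫_ℝ)})
    (s₃ : EuclideanSpace ℝ (Fin 2))
    (h3 : ∀ a ∈ A, ∀ b ∈ A, ⟪a, s₃⟫_ℝ = ⟪b, s₃⟫_ℝ → a = b) :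
    (V : Set (EuclideanSpace ℝ (Fin 2))) = {a ∈ A | ∃ v ∈ V, ⟪a, s₃⟫_ℝ = ⟪v, s₃⟫_ℝ} := by
  subst hA
  exact Set.eq_sep_exists_apply_eq_of_subset_of_injOn
    (subset_setOf_exists_inner_eq_and_exists_inner_eq _ s₁ s₂) fun a ha b hb => h3 a ha b hb

/-- **Vertex Existence (plane graphs).**
If `V ⊂ ℝ²` is a finite set of `n` points, `s₁, s₂` are linearly independent unit
directions whose heights are pairwise distinct on `V`, `A` is the set of intersection
points of the filtration lines of `V` in directions `s₁` and `s₂`, and `s₃` is a unit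
direction in which distinct points of `A` have distinct heights, then
`V = {a ∈ A : ∃ v ∈ V, ⟨a, s₃⟩ = ⟨v, s₃⟩}`. -/
theorem vertex_existence_plane
    (n : ℕ) (V : Finset (EuclideanSpace ℝ (Fin 2))) (hVn : V.card = n)
    (s₁ s₂ : EuclideanSpace ℝ (Fin 2))
    (hs₁ : ‖s₁‖ = 1) (hs₂ : ‖s₂‖ = 1)
    (hind : LinearIndependent ℝ ![s₁, s₂])
    (h1 : ∀ u ∈ V, ∀ v ∈ V, ⟪u, s₁⟫_ℝ = ⟪v, s₁⟫_ℝ → u = v)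
    (h2 : ∀ u ∈ V, ∀ v ∈ V, ⟪u, s₂⟫_ℝ = ⟪v, s₂⟫_ℝ → u = v)
    (A : Set (EuclideanSpace ℝ (Fin 2)))
    (hA : A = {a | (∃ u ∈ V, ⟪a, s₁⟫_ℝ = ⟪u, s₁⟫_ℝ) ∧ (∃ u ∈ V, ⟪a, s₂⟫_ℝ = ⟪u, s₂⟫_ℝ)})
    (s₃ : EuclideanSpace ℝ (Fin 2)) (hs₃ : ‖s₃‖ = 1)
    (h3 : ∀ a ∈ A, ∀ b ∈ A, ⟪a, s₃⟫_ℝ = ⟪b, s₃⟫_ℝ → a = b) :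
    (V : Set (EuclideanSpace ℝ (Fin 2))) = {a ∈ A | ∃ v ∈ V, ⟪a, s₃⟫_ℝ = ⟪v, s₃⟫_ℝ} :=
  vertex_existence_plane_general V s₁ s₂ A hA s₃ h3
end

section
/- Let d ≥ 2 and n ≥ 2. For each i ∈ {1, …, d}, let Hᵢ ⊂ ℝ be a set of n real numbers; let wᵢ be the maximum of Hᵢ minus the minimum of Hᵢ, and let hᵢ be the minimum difference between two distinct elements of Hᵢ. Set w = max_{1 ≤ i ≤ d} wᵢ and h = (1/2) min_{1 ≤ i ≤ d} hᵢ. Let A = H₁ × H₂ × ⋯ × H_d ⊂ ℝ^d, let x = (−1/w, −1/w, …, −1/w, (d−1)/h) ∈ ℝ^d, and let s = x/‖x‖. Then for all p = (p₁, …, p_d) and q = (q₁, …, q_d) in A with p_d ≠ q_d, the heights differ: ⟨p, s⟩ ≠ ⟨q, s⟩. -/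
open scoped InnerProductSpace

/-!
Write `u = p - q`. Every coordinate of `u` has absolute value at most `w`, so the first `d - 1`
coordinates contribute at most `d - 1` to `⟪u, x⟫` in absolute value, while `|u_d| ≥ 2h` makes the
last coordinate contribute at least `2(d - 1)`. Hence `⟪u, x⟫ ≠ 0`, and `s` is a positive multiple
of `x`.
-/

open Finset

section Gaps

variable {α : Type*} [AddCommGroup α] [LinearOrder α] [IsOrderedAddMonoid α]

theorem abs_sub_le_of_mem_upperBounds {H : Finset α} {c : α}
    (hc : c ∈ upperBounds {t : α | ∃ a ∈ H, ∃ b ∈ H, t = a - b}) {a b : α}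
    (ha : a ∈ H) (hb : b ∈ H) : |a - b| ≤ c :=
  abs_sub_le_iff.2 ⟨hc ⟨a, ha, b, hb, rfl⟩, hc ⟨b, hb, a, ha, rfl⟩⟩

theorem pos_of_isLeast_abs_sub {H : Finset α} {m : α}
    (hm : IsLeast {t : α | ∃ a ∈ H, ∃ b ∈ H, a ≠ b ∧ t = |a - b|} m) : 0 < m := by
  obtain ⟨a, -, b, -, hab, rfl⟩ := hm.1
  exact abs_pos.2 (sub_ne_zero.2 hab)

end Gaps

theorem Finset.sum_ne_zero_of_sum_erase_abs_lt {ι : Type*} [Fintype ι] [DecidableEq ι]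
    {f : ι → ℝ} (j : ι) (hf : ∑ i ∈ univ.erase j, |f i| < |f j|) : ∑ i, f i ≠ 0 := by
  rw [← sum_erase_add _ _ (mem_univ j)]
  intro h0
  have hfj : f j = -∑ i ∈ univ.erase j, f i := by linarith
  rw [hfj, abs_neg] at hf
  exact (abs_sum_le_sum_abs _ _).not_gt hf

theorem abs_div_le_one_of_abs_le {a w : ℝ} (h : |a| ≤ w) : |a / w| ≤ 1 := by
  rw [abs_div]
  exact div_le_one_of_le₀ (h.trans (le_abs_self w)) (abs_nonneg w)

theorem sum_mul_ne_zero_of_dominant_coord {ι : Type*} [Fintype ι] [DecidableEq ι]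
    {u x : ι → ℝ} {w h : ℝ} (j : ι) (hι : 2 ≤ Fintype.card ι) (hh : 0 < h)
    (hu : ∀ i, |u i| ≤ w) (huj : 2 * h ≤ |u j|)
    (hx : ∀ i, x i = if i = j then ((Fintype.card ι : ℝ) - 1) / h else -(1 / w)) :
    ∑ i, u i * x i ≠ 0 := by
  have hc : (1 : ℝ) < Fintype.card ι := by exact_mod_cast hι
  refine sum_ne_zero_of_sum_erase_abs_lt j ?_
  have hsmall : ∀ i ∈ univ.erase j, |u i * x i| ≤ 1 := fun i hi => by
    rw [hx i, if_neg (ne_of_mem_erase hi), mul_neg, abs_neg, ← div_eq_mul_one_div]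
    exact abs_div_le_one_of_abs_le (hu i)
  calc ∑ i ∈ univ.erase j, |u i * x i|
      ≤ ∑ i ∈ univ.erase j, (1 : ℝ) := sum_le_sum hsmall
    _ = (Fintype.card ι : ℝ) - 1 := by
      rw [sum_const, card_erase_of_mem (mem_univ j), card_univ, nsmul_one,
        Nat.cast_sub (by omega), Nat.cast_one]
    _ < 2 * h * (((Fintype.card ι : ℝ) - 1) / h) := by
      rw [mul_assoc, mul_div_cancel₀ _ hh.ne']
      linarith
    _ ≤ |u j * x j| := by
      rw [hx j, if_pos rfl, abs_mul, abs_of_pos (div_pos (by linarith) hh)]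
      gcongr

theorem inner_ne_inner_normalize_of_inner_sub_ne_zero {E : Type*} [NormedAddCommGroup E]
    [InnerProductSpace ℝ E] {p q x : E} (h : ⟪p - q, x⟫_ℝ ≠ 0) :
    ⟪p, ‖x‖⁻¹ • x⟫_ℝ ≠ ⟪q, ‖x‖⁻¹ • x⟫_ℝ := by
  have hx : x ≠ 0 := by rintro rfl; exact h (inner_zero_right _)
  rw [← sub_ne_zero, ← inner_sub_left, real_inner_smul_right]
  exact mul_ne_zero (inv_ne_zero (norm_ne_zero_iff.2 hx)) h

theorem generalized_vertex_localization
    (d : ℕ) (hd : 2 ≤ d)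
    (H : Fin d → Finset ℝ)
    (wv hv : Fin d → ℝ)
    (hwv : ∀ i, IsGreatest {t : ℝ | ∃ a ∈ H i, ∃ b ∈ H i, t = a - b} (wv i))
    (hhv : ∀ i, IsLeast {t : ℝ | ∃ a ∈ H i, ∃ b ∈ H i, a ≠ b ∧ t = |a - b|} (hv i))
    (w h : ℝ)
    (hwmax : IsGreatest (Set.range wv) w)
    (hhmin : IsLeast (Set.range hv) (2 * h))
    (x : EuclideanSpace ℝ (Fin d))
    (hx : ∀ i : Fin d, x i = if (i : ℕ) = d - 1 then ((d : ℝ) - 1) / h else -(1 / w))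
    (s : EuclideanSpace ℝ (Fin d)) (hs : s = ‖x‖⁻¹ • x)
    (p q : EuclideanSpace ℝ (Fin d))
    (hp : ∀ i : Fin d, p i ∈ H i) (hq : ∀ i : Fin d, q i ∈ H i)
    (hne : p ⟨d - 1, by omega⟩ ≠ q ⟨d - 1, by omega⟩) :
    ⟪p, s⟫_ℝ ≠ ⟪q, s⟫_ℝ := by
  set D : Fin d := ⟨d - 1, by omega⟩
  have hh : 0 < h := by
    obtain ⟨⟨j, hj⟩, -⟩ := hhmin
    linarith [pos_of_isLeast_abs_sub (hhv j)]
  have hw : ∀ i, |p i - q i| ≤ w := fun i =>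
    (abs_sub_le_of_mem_upperBounds (hwv i).2 (hp i) (hq i)).trans (hwmax.2 ⟨i, rfl⟩)
  have hgap : 2 * h ≤ |p D - q D| :=
    (hhmin.2 ⟨D, rfl⟩).trans ((hhv D).2 ⟨p D, hp D, q D, hq D, hne, rfl⟩)
  have hxD : ∀ i, x i = if i = D then ((Fintype.card (Fin d) : ℝ) - 1) / h else -(1 / w) := by
    simp [hx, Fin.ext_iff, D]
  subst hs
  apply inner_ne_inner_normalize_of_inner_sub_ne_zero
  rw [PiLp.inner_apply]
  simpa [mul_comm] using sum_mul_ne_zero_of_dominant_coord D (by simpa using hd) hh hw hgap hxD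
end

section
/- Let G = (V, E) be a straight-line embedded graph in ℝ^d with d ≥ 2, let v, v′ ∈ V be distinct, and let s₁, s₂ ∈ S^{d−1}. Assume: (i) for every w ∈ V \ {v}, ⟨w, s₁⟩ ≠ ⟨v, s₁⟩ and ⟨w, s₂⟩ ≠ ⟨v, s₂⟩; and (ii) v′ is the unique point of V \ {v} lying in the wedge at v determined by s₁ and s₂. Then |indeg(v, s₁) − indeg(v, s₂)| = 1 if and only if {v, v′} ∈ E. -/
open scoped InnerProductSpace Classical

/-- The indegree of a vertex `v` of a straight-line embedded graph (with vertex set `V`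
and adjacency relation `adj`) in direction `dir`: the number of vertices `w` adjacent
to `v` lying at height at most that of `v` in direction `dir`. -/
noncomputable def indeg {d : ℕ} (V : Finset (EuclideanSpace ℝ (Fin d)))
    (adj : EuclideanSpace ℝ (Fin d) → EuclideanSpace ℝ (Fin d) → Prop)
    (v dir : EuclideanSpace ℝ (Fin d)) : ℕ :=
  (V.filter fun w => adj v w ∧ ⟪w, dir⟫_ℝ ≤ ⟪v, dir⟫_ℝ).card

/-!
Only the neighbours of `v` count towards its indegrees. By (i) and (ii), every vertex
`w ≠ v'` lies below `v` in direction `s₁` iff it does in direction `s₂`, while `v'` lies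
below `v` in exactly one of the two directions. So the two counts agree except for the
contribution of `v'`, which is present in exactly one of them iff `v'` is a neighbour of `v`.
-/

namespace Finset

variable {α : Type*} [DecidableEq α]

theorem card_filter_eq_card_filter_add_one {s : Finset α} {p q : α → Prop}
    [DecidablePred p] [DecidablePred q] {a : α} (hs : a ∈ s)
    (hpq : ∀ x ∈ s, x ≠ a → (p x ↔ q x)) (hp : p a) (hq : ¬q a) :
    #(s.filter p) = #(s.filter q) + 1 := by
  have hrest : (s.erase a).filter p = (s.erase a).filter q :=
    filter_congr fun x hx => hpq x (mem_of_mem_erase hx) (ne_of_mem_erase hx)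
  have ha : a ∉ (s.erase a).filter q := fun h => (ne_of_mem_erase (mem_of_mem_filter a h)) rfl
  rw [← insert_erase hs, filter_insert, filter_insert, if_pos hp, if_neg hq, hrest,
    card_insert_of_notMem ha]

theorem abs_card_filter_sub_card_filter_eq_one_iff (s : Finset α) {p q : α → Prop}
    [DecidablePred p] [DecidablePred q] {a : α}
    (hpq : ∀ x ∈ s, x ≠ a → (p x ↔ q x)) (ha : Xor (p a) (q a)) :
    |(#(s.filter p) : ℤ) - #(s.filter q)| = 1 ↔ a ∈ s := by
  by_cases hs : a ∈ s
  · simp only [hs, iff_true]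
    rcases ha with ⟨hp, hq⟩ | ⟨hq, hp⟩
    · rw [card_filter_eq_card_filter_add_one hs hpq hp hq]
      simp
    · rw [card_filter_eq_card_filter_add_one hs (fun x hx hxa => (hpq x hx hxa).symm) hq hp]
      simp
  · have hfilter : s.filter p = s.filter q :=
      filter_congr fun x hx => hpq x hx fun hxa => hs (hxa ▸ hx)
    simp [hfilter, hs]

end Finset

section LinearOrder

variable {α : Type*} [LinearOrder α] {x y x' y' : α}

theorem le_iff_le_of_not_xor_lt (hx : x ≠ y) (hx' : x' ≠ y')
    (h : ¬Xor (x < y) (x' < y')) : x ≤ y ↔ x' ≤ y' := by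
  rwa [hx.le_iff_lt, hx'.le_iff_lt, ← not_not (a := (_ ↔ _)), ← xor_iff_not_iff]

theorem xor_le_of_xor_lt (hx : x ≠ y) (hx' : x' ≠ y')
    (h : Xor (x < y) (x' < y')) : Xor (x ≤ y) (x' ≤ y') := by
  rwa [hx.le_iff_lt, hx'.le_iff_lt]

end LinearOrder

theorem indeg_eq_card_filter_filter {d : ℕ} (V : Finset (EuclideanSpace ℝ (Fin d)))
    (adj : EuclideanSpace ℝ (Fin d) → EuclideanSpace ℝ (Fin d) → Prop)
    (v dir : EuclideanSpace ℝ (Fin d)) :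
    indeg V adj v dir = ((V.filter (adj v)).filter fun w => ⟪w, dir⟫_ℝ ≤ ⟪v, dir⟫_ℝ).card := by
  rw [indeg, Finset.filter_filter]

theorem edge_existence_general
    (d : ℕ)
    (V : Finset (EuclideanSpace ℝ (Fin d)))
    (adj : EuclideanSpace ℝ (Fin d) → EuclideanSpace ℝ (Fin d) → Prop)
    (v v' : EuclideanSpace ℝ (Fin d)) (hv' : v' ∈ V)
    (s₁ s₂ : EuclideanSpace ℝ (Fin d))
    (hheights : ∀ w ∈ V, w ≠ v → ⟪w, s₁⟫_ℝ ≠ ⟪v, s₁⟫_ℝ ∧ ⟪w, s₂⟫_ℝ ≠ ⟪v, s₂⟫_ℝ)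
    (hwedge : Xor' (⟪v', s₁⟫_ℝ < ⟪v, s₁⟫_ℝ) (⟪v', s₂⟫_ℝ < ⟪v, s₂⟫_ℝ))
    (huniq : ∀ w ∈ V, w ≠ v →
      Xor' (⟪w, s₁⟫_ℝ < ⟪v, s₁⟫_ℝ) (⟪w, s₂⟫_ℝ < ⟪v, s₂⟫_ℝ) → w = v') :
    |(indeg V adj v s₁ : ℤ) - (indeg V adj v s₂ : ℤ)| = 1 ↔ adj v v' := by
  have hv'v : v' ≠ v := by
    rintro rfl
    rcases hwedge with ⟨hlt, -⟩ | ⟨hlt, -⟩ <;> exact lt_irrefl _ hlt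
  have hbelow : ∀ w ∈ V.filter (adj v), w ≠ v' →
      (⟪w, s₁⟫_ℝ ≤ ⟪v, s₁⟫_ℝ ↔ ⟪w, s₂⟫_ℝ ≤ ⟪v, s₂⟫_ℝ) := by
    intro w hw hwv'
    have hwV := Finset.mem_of_mem_filter w hw
    by_cases hwv : w = v
    · simp [hwv]
    exact le_iff_le_of_not_xor_lt (hheights w hwV hwv).1 (hheights w hwV hwv).2
      fun h => hwv' (huniq w hwV hwv h)
  have hv'below := xor_le_of_xor_lt (hheights v' hv' hv'v).1 (hheights v' hv' hv'v).2 hwedge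
  rw [indeg_eq_card_filter_filter, indeg_eq_card_filter_filter,
    Finset.abs_card_filter_sub_card_filter_eq_one_iff _ hbelow hv'below, Finset.mem_filter,
    and_iff_right hv']

/-- **Edge Existence.**
Let `G = (V, E)` be a straight-line embedded graph in `ℝ^d`, `v ≠ v'` vertices, and
`s₁, s₂` unit directions such that no other vertex shares the height of `v` in either
direction and `v'` is the unique point of `V \ {v}` in the wedge at `v` determined by
`s₁` and `s₂` (i.e. exactly one of `⟨·, s₁⟩ < ⟨v, s₁⟩`, `⟨·, s₂⟩ < ⟨v, s₂⟩` holds).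
Then `|indeg(v, s₁) − indeg(v, s₂)| = 1` iff `{v, v'} ∈ E`. -/
theorem edge_existence
    (d : ℕ) (hd : 2 ≤ d)
    (V : Finset (EuclideanSpace ℝ (Fin d)))
    (adj : EuclideanSpace ℝ (Fin d) → EuclideanSpace ℝ (Fin d) → Prop)
    (hsymm : ∀ a b, adj a b → adj b a)
    (hedge : ∀ a b, adj a b → a ∈ V ∧ b ∈ V ∧ a ≠ b)
    (v v' : EuclideanSpace ℝ (Fin d)) (hv : v ∈ V) (hv' : v' ∈ V) (hne : v ≠ v')
    (s₁ s₂ : EuclideanSpace ℝ (Fin d)) (hs₁ : ‖s₁‖ = 1) (hs₂ : ‖s₂‖ = 1)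
    (hheights : ∀ w ∈ V, w ≠ v → ⟪w, s₁⟫_ℝ ≠ ⟪v, s₁⟫_ℝ ∧ ⟪w, s₂⟫_ℝ ≠ ⟪v, s₂⟫_ℝ)
    (hwedge : Xor' (⟪v', s₁⟫_ℝ < ⟪v, s₁⟫_ℝ) (⟪v', s₂⟫_ℝ < ⟪v, s₂⟫_ℝ))
    (huniq : ∀ w ∈ V, w ≠ v →
      Xor' (⟪w, s₁⟫_ℝ < ⟪v, s₁⟫_ℝ) (⟪w, s₂⟫_ℝ < ⟪v, s₂⟫_ℝ) → w = v') :
    |(indeg V adj v s₁ : ℤ) - (indeg V adj v s₂ : ℤ)| = 1 ↔ adj v v' :=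
  edge_existence_general d V adj v v' hv' s₁ s₂ hheights hwedge huniq
end

section
/- Let d ≥ 2 and let V ⊂ ℝ^d be a finite set with no three points collinear. Let E₁ and E₂ be two sets of unordered pairs of distinct points of V, and for j ∈ {1, 2} let indeg_{E_j}(v, s) = |{w ∈ V : {v, w} ∈ E_j and ⟨w, s⟩ ≤ ⟨v, s⟩}|. If indeg_{E₁}(v, s) = indeg_{E₂}(v, s) for every v ∈ V and every direction s ∈ S^{d−1}, then E₁ = E₂. In other words, the edge set of a straight-line embedded graph on a fixed vertex set in general position is uniquely determined by its directional indegree function. -/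
/-!
For a vertex `v` and a unit vector `s`, the indegrees of `v` in the directions `s` and `-s`
together count every neighbour of `v` once, and the neighbours on the hyperplane through `v`
orthogonal to `s` twice. A direction orthogonal to no `u - v` therefore recovers the degree of
`v`. Since no three points are collinear and `d ≥ 2`, some direction is orthogonal to `w - v` but
to no other `u - v`; for it the excess over the degree is one exactly when `vw` is an edge.
-/

open scoped InnerProductSpace Classical

open Finset Module

theorem Finset.card_filter_le_add_card_filter_ge {α β : Type*} [LinearOrder β] (s : Finset α)
    (p : α → Prop) (f : α → β) (c : β) :
    #{a ∈ s | p a ∧ f a ≤ c} + #{a ∈ s | p a ∧ c ≤ f a} =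
      #{a ∈ s | p a} + #{a ∈ s | p a ∧ f a = c} := by
  rw [← card_union_add_card_inter, ← filter_or, ← filter_and]
  congr 2 <;> ext a <;> simp only [mem_filter]
  · have := le_total (f a) c
    tauto
  · constructor
    · rintro ⟨h, ⟨hp, hle⟩, -, hge⟩
      exact ⟨h, hp, le_antisymm hle hge⟩
    · rintro ⟨h, hp, rfl⟩
      exact ⟨h, ⟨hp, le_rfl⟩, hp, le_rfl⟩

namespace EmbeddedGraph

variable {E : Type*} [NormedAddCommGroup E] [InnerProductSpace ℝ E]

theorem exists_norm_eq_one_forall_inner_ne_zero {H : Submodule ℝ E} (hH : H ≠ ⊥)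
    {U : Finset E} (hU : ∀ u ∈ U, u ∉ Hᗮ) :
    ∃ s ∈ H, ‖s‖ = 1 ∧ ∀ u ∈ U, ⟪u, s⟫_ℝ ≠ 0 := by
  -- `H` is not covered by the finitely many proper subspaces `{0}` and `H ∩ uᗮ`, `u ∈ U`.
  let p : Option U → Submodule ℝ H
    | none => ⊥
    | some u => (ℝ ∙ (u : E))ᗮ.comap H.subtype
  obtain ⟨x, hx⟩ : ∃ x : H, ∀ i, x ∉ p i := by
    by_contra! hcover
    obtain ⟨i | u, hi⟩ := Subspace.exists_eq_top_of_iUnion_eq_univ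
      (Set.iUnion_eq_univ_iff.mpr hcover)
    · refine hH ((Submodule.eq_bot_iff H).mpr fun h hh => ?_)
      have : (⟨h, hh⟩ : H) ∈ p none := hi ▸ Submodule.mem_top
      simpa [p] using this
    · exact hU u u.2 ((Submodule.mem_orthogonal' _ _).mpr fun h hh =>
        Submodule.mem_orthogonal_singleton_iff_inner_right.mp
          (Submodule.comap_subtype_eq_top.mp hi hh))
  have hx0 : (x : E) ≠ 0 := fun h => hx none (Subtype.ext h)
  refine ⟨‖(x : E)‖⁻¹ • x, H.smul_mem _ x.2, norm_smul_inv_norm hx0, fun u hu => ?_⟩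
  rw [real_inner_smul_right]
  exact mul_ne_zero (inv_ne_zero (norm_ne_zero_iff.mpr hx0)) fun h =>
    hx (some ⟨u, hu⟩) (Submodule.mem_orthogonal_singleton_iff_inner_right.mpr h)

theorem sub_notMem_span_sub_of_not_collinear {u v w : E}
    (h : ¬ Collinear ℝ ({u, v, w} : Set E)) : u - v ∉ ℝ ∙ (w - v) := by
  intro hmem
  obtain ⟨r, hr⟩ := Submodule.mem_span_singleton.mp hmem
  have hu : u = r • (w -ᵥ v) +ᵥ v := by rw [vsub_eq_sub, hr, vadd_eq_add, sub_add_cancel]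
  exact h (collinear_insert_of_mem_affineSpan_pair (hu ▸ smul_vsub_vadd_mem_affineSpan_pair r v w))

noncomputable section Graph

variable (V : Finset E) (adj : E → E → Prop)

def indeg (v s : E) : ℕ := #{w ∈ V | adj v w ∧ ⟪w, s⟫_ℝ ≤ ⟪v, s⟫_ℝ}

def degree (v : E) : ℕ := #{w ∈ V | adj v w}

def levelDegree (v s : E) : ℕ := #{w ∈ V | adj v w ∧ ⟪w, s⟫_ℝ = ⟪v, s⟫_ℝ}

theorem indeg_add_indeg_neg (v s : E) :
    indeg V adj v s + indeg V adj v (-s) = degree V adj v + levelDegree V adj v s := by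
  simp only [indeg, inner_neg_right, neg_le_neg_iff]
  exact card_filter_le_add_card_filter_ge _ _ _ _

variable {V adj}

theorem levelDegree_eq_zero {v s : E} (hirr : ¬ adj v v)
    (hs : ∀ u ∈ V, u ≠ v → ⟪u, s⟫_ℝ ≠ ⟪v, s⟫_ℝ) : levelDegree V adj v s = 0 := by
  refine card_eq_zero.mpr (filter_eq_empty_iff.mpr ?_)
  rintro u hu ⟨hadj, heq⟩
  exact hs u hu (by rintro rfl; exact hirr hadj) heq

theorem levelDegree_eq_ite {v w s : E} (hirr : ¬ adj v v) (hw : w ∈ V)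
    (hws : ⟪w, s⟫_ℝ = ⟪v, s⟫_ℝ) (hs : ∀ u ∈ V, u ≠ v → u ≠ w → ⟪u, s⟫_ℝ ≠ ⟪v, s⟫_ℝ) :
    levelDegree V adj v s = if adj v w then 1 else 0 := by
  have hlevel : {u ∈ V | adj v u ∧ ⟪u, s⟫_ℝ = ⟪v, s⟫_ℝ} = {u ∈ ({w} : Finset E) | adj v u} := by
    ext u
    simp only [mem_filter, mem_singleton]
    constructor
    · rintro ⟨hu, hadj, heq⟩
      refine ⟨?_, hadj⟩
      by_contra huw
      exact hs u hu (by rintro rfl; exact hirr hadj) huw heq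
    · rintro ⟨rfl, hadj⟩
      exact ⟨hw, hadj, hws⟩
  rw [levelDegree, hlevel, filter_singleton]
  split_ifs <;> rfl

end Graph

theorem exists_norm_eq_one_forall_inner_ne [Nontrivial E] (V : Finset E) (v : E) :
    ∃ s : E, ‖s‖ = 1 ∧ ∀ u ∈ V, u ≠ v → ⟪u, s⟫_ℝ ≠ ⟪v, s⟫_ℝ := by
  obtain ⟨s, -, hs, hsV⟩ := exists_norm_eq_one_forall_inner_ne_zero (H := ⊤) top_ne_bot
    (U := (V.erase v).image (· - v)) (by
      simp only [forall_mem_image, mem_erase, Submodule.top_orthogonal_eq_bot, Submodule.mem_bot]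
      rintro u ⟨huv, -⟩
      exact sub_ne_zero.mpr huv)
  refine ⟨s, hs, fun u hu huv => ?_⟩
  rw [← sub_ne_zero, ← inner_sub_left]
  exact hsV _ (mem_image_of_mem _ (mem_erase.mpr ⟨huv, hu⟩))

theorem exists_norm_eq_one_inner_eq_forall_inner_ne (hE : 2 ≤ finrank ℝ E) (V : Finset E)
    {v w : E} (hgen : ∀ u ∈ V, u ≠ v → u ≠ w → ¬ Collinear ℝ ({u, v, w} : Set E)) :
    ∃ t : E, ‖t‖ = 1 ∧ ⟪w, t⟫_ℝ = ⟪v, t⟫_ℝ ∧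
      ∀ u ∈ V, u ≠ v → u ≠ w → ⟪u, t⟫_ℝ ≠ ⟪v, t⟫_ℝ := by
  have hline : (ℝ ∙ (w - v)) ≠ ⊤ := by
    intro htop
    have := finrank_span_le_card (R := ℝ) ({w - v} : Set E)
    rw [htop, finrank_top] at this
    simp only [Set.toFinset_singleton, card_singleton] at this
    omega
  obtain ⟨t, htH, ht, htV⟩ := exists_norm_eq_one_forall_inner_ne_zero
    (H := (ℝ ∙ (w - v))ᗮ) (Submodule.orthogonal_eq_bot_iff.not.mpr hline)
    (U := ((V.erase v).erase w).image (· - v)) (by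
      simp only [forall_mem_image, mem_erase, Submodule.orthogonal_orthogonal]
      rintro u ⟨huw, huv, hu⟩
      exact sub_notMem_span_sub_of_not_collinear (hgen u hu huv huw))
  refine ⟨t, ht, ?_, fun u hu huv huw => ?_⟩
  · rw [← sub_eq_zero, ← inner_sub_left]
    exact Submodule.mem_orthogonal_singleton_iff_inner_right.mp htH
  · rw [← sub_ne_zero, ← inner_sub_left]
    exact htV _ (mem_image_of_mem _ (mem_erase.mpr ⟨huw, mem_erase.mpr ⟨huv, hu⟩⟩))

theorem adj_iff_of_indeg_eq (hE : 2 ≤ finrank ℝ E) {V : Finset E} {adj₁ adj₂ : E → E → Prop}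
    {v w : E} (hirr₁ : ¬ adj₁ v v) (hirr₂ : ¬ adj₂ v v) (hw : w ∈ V) (hvw : v ≠ w)
    (hgen : ∀ u ∈ V, u ≠ v → u ≠ w → ¬ Collinear ℝ ({u, v, w} : Set E))
    (hind : ∀ s : E, ‖s‖ = 1 → indeg V adj₁ v s = indeg V adj₂ v s) :
    adj₁ v w ↔ adj₂ v w := by
  have hsum : ∀ s : E, ‖s‖ = 1 →
      degree V adj₁ v + levelDegree V adj₁ v s = degree V adj₂ v + levelDegree V adj₂ v s := by
    intro s hs
    rw [← indeg_add_indeg_neg, ← indeg_add_indeg_neg, hind s hs, hind (-s) (by rwa [norm_neg])]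
  have : Nontrivial E := nontrivial_of_ne v w hvw
  obtain ⟨s, hs, hsV⟩ := exists_norm_eq_one_forall_inner_ne V v
  have hdeg : degree V adj₁ v = degree V adj₂ v := by
    simpa [levelDegree_eq_zero hirr₁ hsV, levelDegree_eq_zero hirr₂ hsV] using hsum s hs
  obtain ⟨t, ht, htw, htV⟩ := exists_norm_eq_one_inner_eq_forall_inner_ne hE V hgen
  have hlevel := hsum t ht
  rw [hdeg, levelDegree_eq_ite hirr₁ hw htw htV, levelDegree_eq_ite hirr₂ hw htw htV] at hlevel
  split_ifs at hlevel <;> simp_all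

end EmbeddedGraph

theorem edges_determined_by_indegrees_general
    (d : ℕ) (hd : 2 ≤ d)
    (V : Finset (EuclideanSpace ℝ (Fin d)))
    (hgen : ∀ a ∈ V, ∀ b ∈ V, ∀ c ∈ V, a ≠ b → a ≠ c → b ≠ c →
      ¬ Collinear ℝ ({a, b, c} : Set (EuclideanSpace ℝ (Fin d))))
    (adj₁ adj₂ : EuclideanSpace ℝ (Fin d) → EuclideanSpace ℝ (Fin d) → Prop)
    (hedge₁ : ∀ a b, adj₁ a b → a ∈ V ∧ b ∈ V ∧ a ≠ b)
    (hedge₂ : ∀ a b, adj₂ a b → a ∈ V ∧ b ∈ V ∧ a ≠ b)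
    (hind : ∀ v ∈ V, ∀ s : EuclideanSpace ℝ (Fin d), ‖s‖ = 1 →
      (V.filter fun w => adj₁ v w ∧ ⟪w, s⟫_ℝ ≤ ⟪v, s⟫_ℝ).card =
      (V.filter fun w => adj₂ v w ∧ ⟪w, s⟫_ℝ ≤ ⟪v, s⟫_ℝ).card) :
    ∀ a b, adj₁ a b ↔ adj₂ a b := by
  intro a b
  by_cases hab : a ∈ V ∧ b ∈ V ∧ a ≠ b
  · obtain ⟨ha, hb, hne⟩ := hab
    have hE : 2 ≤ finrank ℝ (EuclideanSpace ℝ (Fin d)) := by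
      rwa [finrank_euclideanSpace_fin]
    exact EmbeddedGraph.adj_iff_of_indeg_eq hE (fun h => (hedge₁ a a h).2.2 rfl)
      (fun h => (hedge₂ a a h).2.2 rfl) hb hne
      (fun u hu hua hub => hgen u hu a ha b hb hua hub hne) (hind a ha)
  · exact iff_of_false (fun h => hab (hedge₁ a b h)) (fun h => hab (hedge₂ a b h))

/-- **Edges are determined by directional indegrees.**
Let `V ⊂ ℝ^d` (`d ≥ 2`) be finite with no three points collinear, and let `E₁`, `E₂`
be two edge sets on `V` (symmetric adjacency relations between distinct points of
`V`).  If for every `v ∈ V` and every unit direction `s` the directional indegrees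
`|{w ∈ V : {v,w} ∈ Eⱼ, ⟨w, s⟩ ≤ ⟨v, s⟩}|` agree for `j = 1, 2`, then `E₁ = E₂`. -/
theorem edges_determined_by_indegrees
    (d : ℕ) (hd : 2 ≤ d)
    (V : Finset (EuclideanSpace ℝ (Fin d)))
    (hgen : ∀ a ∈ V, ∀ b ∈ V, ∀ c ∈ V, a ≠ b → a ≠ c → b ≠ c →
      ¬ Collinear ℝ ({a, b, c} : Set (EuclideanSpace ℝ (Fin d))))
    (adj₁ adj₂ : EuclideanSpace ℝ (Fin d) → EuclideanSpace ℝ (Fin d) → Prop)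
    (hsymm₁ : ∀ a b, adj₁ a b → adj₁ b a)
    (hedge₁ : ∀ a b, adj₁ a b → a ∈ V ∧ b ∈ V ∧ a ≠ b)
    (hsymm₂ : ∀ a b, adj₂ a b → adj₂ b a)
    (hedge₂ : ∀ a b, adj₂ a b → a ∈ V ∧ b ∈ V ∧ a ≠ b)
    (hind : ∀ v ∈ V, ∀ s : EuclideanSpace ℝ (Fin d), ‖s‖ = 1 →
      (V.filter fun w => adj₁ v w ∧ ⟪w, s⟫_ℝ ≤ ⟪v, s⟫_ℝ).card =
      (V.filter fun w => adj₂ v w ∧ ⟪w, s⟫_ℝ ≤ ⟪v, s⟫_ℝ).card) :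
    ∀ a b, adj₁ a b ↔ adj₂ a b :=
  edges_determined_by_indegrees_general d hd V hgen adj₁ adj₂ hedge₁ hedge₂ hind
end

section
/- Let V ⊂ ℝ² be a set of n ≥ 2 points whose first coordinates are pairwise distinct and whose second coordinates are pairwise distinct. Let X be the set of first coordinates of points of V and Y the set of second coordinates, and let A = X × Y ⊂ ℝ² (the n² candidate locations). Let w be the maximum of X minus the minimum of X, let h be the minimum difference between two distinct elements of Y, and let s = (−h/2, w)/‖(−h/2, w)‖ (a unit vector perpendicular to (w, h/2)). Then V = {a ∈ A : ∃ v ∈ V, ⟨a, s⟩ = ⟨v, s⟩}; that is, the points of V are exactly the candidate locations whose height in direction s equals the height of some point of V, so V is determined by its sets of heights in the directions (1,0), (0,1), and s. -/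
open scoped InnerProductSpace Classical

/-!
Write `u₀ = (-h/2, w)`. Two candidate locations `a`, `v` of equal height in direction `u₀`
satisfy `w (a₁ - v₁) = (h/2) (a₀ - v₀)`. The right side has absolute value at most `(h/2) w`,
while a nonzero difference of second coordinates has absolute value at least `h`, making the
left side at least `w h`; here `w > 0` because the two points of `V` realising the gap `h`
have distinct first coordinates. So `a₁ = v₁`, hence `a₀ = v₀`, and `a = v ∈ V`.
-/

lemma eq_zero_of_mul_eq_mul_of_abs_le {w c h dx dy : ℝ} (hw : 0 < w) (hc : 0 ≤ c) (hch : c < h)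
    (hdx : |dx| ≤ w) (hdy : dy ≠ 0 → h ≤ |dy|) (heq : w * dy = c * dx) : dy = 0 := by
  by_contra hne
  have habs : w * |dy| = c * |dx| := by
    simpa only [abs_mul, abs_of_pos hw, abs_of_nonneg hc] using congrArg abs heq
  have := hdy hne
  nlinarith [mul_le_mul_of_nonneg_left hdx hc]

lemma EuclideanSpace.inner_fin_two (x y : EuclideanSpace ℝ (Fin 2)) :
    ⟪x, y⟫_ℝ = x 0 * y 0 + x 1 * y 1 := by
  simp [PiLp.inner_apply, Fin.sum_univ_two, mul_comm]

lemma eq_of_inner_eq_of_mem_grid {X Y : Set ℝ} {w h : ℝ} (hw : 0 < w) (hh : 0 < h)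
    (hX : ∀ a ∈ X, ∀ b ∈ X, a - b ≤ w) (hY : ∀ a ∈ Y, ∀ b ∈ Y, a ≠ b → h ≤ |a - b|)
    {u a v : EuclideanSpace ℝ (Fin 2)} (hu0 : u 0 = -(h / 2)) (hu1 : u 1 = w)
    (ha : a 0 ∈ X ∧ a 1 ∈ Y) (hv : v 0 ∈ X ∧ v 1 ∈ Y) (hav : ⟪a, u⟫_ℝ = ⟪v, u⟫_ℝ) :
    a = v := by
  simp only [EuclideanSpace.inner_fin_two, hu0, hu1] at hav
  have heq : w * (a 1 - v 1) = h / 2 * (a 0 - v 0) := by linarith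
  have hdx : |a 0 - v 0| ≤ w := abs_sub_le_iff.2 ⟨hX _ ha.1 _ hv.1, hX _ hv.1 _ ha.1⟩
  have hdy : a 1 - v 1 = 0 :=
    eq_zero_of_mul_eq_mul_of_abs_le hw (by positivity) (by linarith) hdx
      (fun hne => hY _ ha.2 _ hv.2 (sub_ne_zero.1 hne)) heq
  have hdx0 : a 0 - v 0 = 0 := by
    rw [hdy, mul_zero, eq_comm, mul_eq_zero] at heq
    exact heq.resolve_left (by positivity)
  ext i
  fin_cases i
  · exact sub_eq_zero.1 hdx0
  · exact sub_eq_zero.1 hdy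

lemma pos_of_isGreatest_sub {X : Set ℝ} {w : ℝ}
    (hw : IsGreatest {t : ℝ | ∃ a ∈ X, ∃ b ∈ X, t = a - b} w)
    {a b : ℝ} (ha : a ∈ X) (hb : b ∈ X) (hab : a ≠ b) : 0 < w := by
  have h₁ : a - b ≤ w := hw.2 ⟨a, ha, b, hb, rfl⟩
  have h₂ : b - a ≤ w := hw.2 ⟨b, hb, a, ha, rfl⟩
  rcases hab.lt_or_gt with hlt | hlt <;> linarith

theorem plane_vertex_reconstruction_general
    (V : Finset (EuclideanSpace ℝ (Fin 2)))
    (hfst : ∀ u ∈ V, ∀ v ∈ V, u 0 = v 0 → u = v)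
    (X Y : Finset ℝ)
    (hX : X = V.image fun v => v 0) (hY : Y = V.image fun v => v 1)
    (w h : ℝ)
    (hw : IsGreatest {t : ℝ | ∃ a ∈ X, ∃ b ∈ X, t = a - b} w)
    (hh : IsLeast {t : ℝ | ∃ a ∈ Y, ∃ b ∈ Y, a ≠ b ∧ t = |a - b|} h)
    (u₀ : EuclideanSpace ℝ (Fin 2)) (hu₀0 : u₀ 0 = -(h / 2)) (hu₀1 : u₀ 1 = w)
    (s : EuclideanSpace ℝ (Fin 2)) (hs : s = ‖u₀‖⁻¹ • u₀) :
    (V : Set (EuclideanSpace ℝ (Fin 2))) =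
      {a : EuclideanSpace ℝ (Fin 2) | (a 0 ∈ X ∧ a 1 ∈ Y) ∧
        ∃ v ∈ V, ⟪a, s⟫_ℝ = ⟪v, s⟫_ℝ} := by
  have hcoords : ∀ v ∈ V, v 0 ∈ X ∧ v 1 ∈ Y := fun v hv =>
    ⟨hX ▸ Finset.mem_image_of_mem _ hv, hY ▸ Finset.mem_image_of_mem _ hv⟩
  obtain ⟨y₁, hy₁, y₂, hy₂, hy, hh_eq⟩ := hh.1
  have hh_pos : 0 < h := hh_eq ▸ abs_pos.2 (sub_ne_zero.2 hy)
  obtain ⟨p, hp, rfl⟩ := Finset.mem_image.1 (hY ▸ hy₁)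
  obtain ⟨q, hq, rfl⟩ := Finset.mem_image.1 (hY ▸ hy₂)
  have hpq : p 0 ≠ q 0 := fun h₀ => hy (by rw [hfst p hp q hq h₀])
  have hw_pos : 0 < w := pos_of_isGreatest_sub hw (hcoords p hp).1 (hcoords q hq).1 hpq
  have hu₀ : u₀ ≠ 0 := ne_of_apply_ne (· 1) (by simpa [hu₀1] using hw_pos.ne')
  have hscale : ‖u₀‖⁻¹ ≠ 0 := inv_ne_zero (norm_ne_zero_iff.2 hu₀)
  ext a
  constructor
  · exact fun ha => ⟨hcoords a ha, a, ha, rfl⟩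
  · rintro ⟨ha, v, hv, hav⟩
    rw [hs, real_inner_smul_right, real_inner_smul_right, mul_right_inj' hscale] at hav
    rwa [eq_of_inner_eq_of_mem_grid hw_pos hh_pos (fun a ha b hb => hw.2 ⟨a, ha, b, hb, rfl⟩)
      (fun a ha b hb hab => hh.2 ⟨a, ha, b, hb, hab, rfl⟩) hu₀0 hu₀1 ha (hcoords v hv) hav]

/-- **Plane vertex reconstruction from three directions.**
Let `V ⊂ ℝ²` be `n ≥ 2` points with pairwise distinct first coordinates and pairwise
distinct second coordinates, `X` and `Y` the sets of first and second coordinates, and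
`A = X × Y` the `n²` candidate locations.  With `w` the diameter of `X`, `h` the
minimum gap of `Y`, and `s = (−h/2, w)/‖(−h/2, w)‖`, the points of `V` are exactly the
candidate locations whose height in direction `s` equals the height of some point of
`V`; hence `V` is determined by its heights in directions `(1,0)`, `(0,1)`, and `s`. -/
theorem plane_vertex_reconstruction
    (n : ℕ) (hn : 2 ≤ n)
    (V : Finset (EuclideanSpace ℝ (Fin 2))) (hVn : V.card = n)
    (hfst : ∀ u ∈ V, ∀ v ∈ V, u 0 = v 0 → u = v)
    (hsnd : ∀ u ∈ V, ∀ v ∈ V, u 1 = v 1 → u = v)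
    (X Y : Finset ℝ)
    (hX : X = V.image fun v => v 0) (hY : Y = V.image fun v => v 1)
    (w h : ℝ)
    (hw : IsGreatest {t : ℝ | ∃ a ∈ X, ∃ b ∈ X, t = a - b} w)
    (hh : IsLeast {t : ℝ | ∃ a ∈ Y, ∃ b ∈ Y, a ≠ b ∧ t = |a - b|} h)
    (u₀ : EuclideanSpace ℝ (Fin 2)) (hu₀0 : u₀ 0 = -(h / 2)) (hu₀1 : u₀ 1 = w)
    (s : EuclideanSpace ℝ (Fin 2)) (hs : s = ‖u₀‖⁻¹ • u₀) :
    (V : Set (EuclideanSpace ℝ (Fin 2))) =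
      {a : EuclideanSpace ℝ (Fin 2) | (a 0 ∈ X ∧ a 1 ∈ Y) ∧
        ∃ v ∈ V, ⟪a, s⟫_ℝ = ⟪v, s⟫_ℝ} :=
  plane_vertex_reconstruction_general V hfst X Y hX hY w h hw hh u₀ hu₀0 hu₀1 s hs
end

section
/- Let d ≥ 2 and let V ⊂ ℝ^d be a finite set of n points such that for each i ∈ {1, …, d} the i-th coordinates of the points of V are pairwise distinct. For each i, let Hᵢ be the set of i-th coordinates of points of V, and let A = H₁ × H₂ × ⋯ × H_d ⊂ ℝ^d (the n^d candidate locations). Then there exists a direction s ∈ S^{d−1} such that distinct points of A have distinct heights in direction s, and for any such s, V = {a ∈ A : ∃ v ∈ V, ⟨a, s⟩ = ⟨v, s⟩}; that is, V is determined by its sets of heights in the d coordinate directions e₁, …, e_d together with the direction s. -/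
/-!
A direction `s` separates the finite grid `A = H₁ × ⋯ × H_d` as soon as it avoids the finitely
many hyperplanes `(a - b)ᗮ`, `a ≠ b ∈ A`, and a real vector space is not a finite union of proper
subspaces. Since `V ⊆ A`, injectivity of the height on `A` means a grid point sharing its height
with some `v ∈ V` is `v` itself.
-/

open scoped InnerProductSpace Pointwise

section InnerProductSpace

variable {𝕜 E : Type*} [RCLike 𝕜] [NormedAddCommGroup E] [InnerProductSpace 𝕜 E]

theorem exists_forall_inner_ne_zero {W : Set E} (hW : W.Finite) (h0 : (0 : E) ∉ W) :
    ∃ s : E, ∀ w ∈ W, ⟪w, s⟫_𝕜 ≠ 0 := by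
  by_contra! hcover
  have : Finite W := hW
  obtain ⟨⟨w, hw⟩, htop⟩ := Subspace.exists_eq_top_of_iUnion_eq_univ
    (p := fun w : W => (𝕜 ∙ (w : E))ᗮ) <| Set.eq_univ_of_forall fun s => by
      obtain ⟨w, hw, hws⟩ := hcover s
      exact Set.mem_iUnion.mpr ⟨⟨w, hw⟩, Submodule.mem_orthogonal_singleton_iff_inner_right.mpr hws⟩
  rw [Submodule.orthogonal_eq_top_iff, Submodule.span_singleton_eq_bot] at htop
  exact h0 (htop ▸ hw)

end InnerProductSpace

section RealInnerProductSpace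

variable {E : Type*} [NormedAddCommGroup E] [InnerProductSpace ℝ E]

theorem exists_norm_eq_one_injOn_inner [Nontrivial E] {A : Set E} (hA : A.Finite) :
    ∃ s : E, ‖s‖ = 1 ∧ A.InjOn fun a => ⟪a, s⟫_ℝ := by
  -- `x` only serves to make `s ≠ 0`.
  obtain ⟨x, hx⟩ := exists_ne (0 : E)
  obtain ⟨s, hs⟩ := exists_forall_inner_ne_zero (𝕜 := ℝ) (((hA.sub hA).sdiff (t := {0})).insert x)
    (by simp [hx.symm])
  have hs0 : s ≠ 0 := by
    rintro rfl
    exact hs x (Set.mem_insert x _) (inner_zero_right x)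
  refine ⟨‖s‖⁻¹ • s, norm_smul_inv_norm hs0, fun a ha b hb hab => ?_⟩
  by_contra hne
  have hdiff : a - b ∈ insert x ((A - A) \ {0}) :=
    Set.mem_insert_of_mem x ⟨Set.sub_mem_sub ha hb, sub_ne_zero.mpr hne⟩
  apply hs (a - b) hdiff
  simp only [real_inner_smul_right, inv_ne_zero (norm_ne_zero_iff.mpr hs0),
    mul_eq_mul_left_iff, or_false] at hab
  rw [inner_sub_left, hab, sub_self]

end RealInnerProductSpace

/-- The grid `H₁ × ⋯ × H_d` of points whose every coordinate is a coordinate of a point of `V`. -/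
def candidateLocations {ι : Type*} [Fintype ι] (V : Finset (EuclideanSpace ℝ ι)) :
    Set (EuclideanSpace ℝ ι) :=
  {a | ∀ i, a i ∈ V.image fun v => v i}

theorem candidateLocations_finite {ι : Type*} [Fintype ι] (V : Finset (EuclideanSpace ℝ ι)) :
    (candidateLocations V).Finite :=
  (Set.Finite.pi fun i => (V.image fun v : EuclideanSpace ℝ ι => v i).finite_toSet).preimage
    (WithLp.ofLp_injective 2).injOn |>.subset fun _ ha i _ => ha i

theorem subset_candidateLocations {ι : Type*} [Fintype ι] (V : Finset (EuclideanSpace ℝ ι)) :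
    (V : Set (EuclideanSpace ℝ ι)) ⊆ candidateLocations V :=
  fun _ hv _ => Finset.mem_image_of_mem _ hv

theorem vertex_reconstruction_higher_dim_general
    (d : ℕ) (hd : 2 ≤ d)
    (V : Finset (EuclideanSpace ℝ (Fin d))) :
    (∃ s : EuclideanSpace ℝ (Fin d), ‖s‖ = 1 ∧
      ∀ a b : EuclideanSpace ℝ (Fin d),
        (∀ i : Fin d, a i ∈ V.image fun v => v i) →
        (∀ i : Fin d, b i ∈ V.image fun v => v i) →
        ⟪a, s⟫_ℝ = ⟪b, s⟫_ℝ → a = b) ∧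
    ∀ s : EuclideanSpace ℝ (Fin d), ‖s‖ = 1 →
      (∀ a b : EuclideanSpace ℝ (Fin d),
        (∀ i : Fin d, a i ∈ V.image fun v => v i) →
        (∀ i : Fin d, b i ∈ V.image fun v => v i) →
        ⟪a, s⟫_ℝ = ⟪b, s⟫_ℝ → a = b) →
      (V : Set (EuclideanSpace ℝ (Fin d))) =
        {a : EuclideanSpace ℝ (Fin d) | (∀ i : Fin d, a i ∈ V.image fun v => v i) ∧
          ∃ v ∈ V, ⟪a, s⟫_ℝ = ⟪v, s⟫_ℝ} := by
  have : Nonempty (Fin d) := ⟨⟨0, by omega⟩⟩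
  refine ⟨?_, fun s _ hinj => ?_⟩
  · obtain ⟨s, hs, hinj⟩ := exists_norm_eq_one_injOn_inner (candidateLocations_finite V)
    exact ⟨s, hs, fun a b ha hb => hinj ha hb⟩
  · have hinjOn : (candidateLocations V).InjOn fun a => ⟪a, s⟫_ℝ :=
      fun a ha b hb => hinj a b ha hb
    rw [← hinjOn.preimage_image_inter (subset_candidateLocations V)]
    ext a
    simp only [Set.mem_inter_iff, Set.mem_preimage, Set.mem_image, Finset.mem_coe, eq_comm]
    exact and_comm

/-- **Vertex reconstruction in higher dimensions.**
Let `V ⊂ ℝ^d` (`d ≥ 2`) be `n` points whose `i`-th coordinates are pairwise distinct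
for every `i`.  With `Hᵢ` the set of `i`-th coordinates and `A = H₁ × ⋯ × H_d` the
`n^d` candidate locations, there is a unit direction `s` in which distinct points of
`A` have distinct heights; and for any such `s`, the points of `V` are exactly the
candidate locations whose height in direction `s` equals the height of some point of
`V`.  Hence `V` is determined by its heights in the coordinate directions together
with `s`. -/
theorem vertex_reconstruction_higher_dim
    (d n : ℕ) (hd : 2 ≤ d)
    (V : Finset (EuclideanSpace ℝ (Fin d))) (hVn : V.card = n)
    (hcoord : ∀ i : Fin d, ∀ u ∈ V, ∀ v ∈ V, u i = v i → u = v) :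
    (∃ s : EuclideanSpace ℝ (Fin d), ‖s‖ = 1 ∧
      ∀ a b : EuclideanSpace ℝ (Fin d),
        (∀ i : Fin d, a i ∈ V.image fun v => v i) →
        (∀ i : Fin d, b i ∈ V.image fun v => v i) →
        ⟪a, s⟫_ℝ = ⟪b, s⟫_ℝ → a = b) ∧
    ∀ s : EuclideanSpace ℝ (Fin d), ‖s‖ = 1 →
      (∀ a b : EuclideanSpace ℝ (Fin d),
        (∀ i : Fin d, a i ∈ V.image fun v => v i) →
        (∀ i : Fin d, b i ∈ V.image fun v => v i) →
        ⟪a, s⟫_ℝ = ⟪b, s⟫_ℝ → a = b) →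
      (V : Set (EuclideanSpace ℝ (Fin d))) =
        {a : EuclideanSpace ℝ (Fin d) | (∀ i : Fin d, a i ∈ V.image fun v => v i) ∧
          ∃ v ∈ V, ⟪a, s⟫_ℝ = ⟪v, s⟫_ℝ} :=
  vertex_reconstruction_higher_dim_general d hd V
end
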